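/- Let N ≥ 1, H = (H₁,…,H_N) ∈ (0,1)^N and K = (K₁,…,K_N) ∈ (0,1]^N, and let R_N(s,t) = Π_{j=1}^N 2^{−K_j}[(s_j^{2H_j} + t_j^{2H_j})^{K_j} − |t_j − s_j|^{2H_jK_j}] be the covariance of the bifractional Brownian sheet. Then for every ε ∈ (0,1) there exist positive finite constants c₇ and c₈ such that for all s, t ∈ [ε,1]^N: (i) c₇ Σ_{j=1}^N |s_j − t_j|^{2H_jK_j} ≤ R_N(s,s) + R_N(t,t) − 2R_N(s,t) ≤ c₈ Σ_{j=1}^N |s_j − t_j|^{2H_jK_j}, and (ii) c₇ Σ_{j=1}^N |s_j − t_j|^{2H_jK_j} ≤ R_N(s,s)·R_N(t,t) − R_N(s,t)² ≤ c₈ Σ_{j=1}^N |s_j − t_j|^{2H_jK_j}. (The quantity in (i) equals E[(B₁^{H,K}(s) − B₁^{H,K}(t))²] and the quantity in (ii) equals the determinant of the covariance matrix of (B₁^{H,K}(s), B₁^{H,K}(t)) for a real-valued bifractional Brownian sheet B₁^{H,K}.) -/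

import Mathlib

open Real Finset

section Helpers

/-- Subadditivity of `rpow` for exponents in `[0,1]`. -/
lemma my_rpow_add_le {p a b : ℝ} (ha : 0 ≤ a) (hb : 0 ≤ b) (hp : 0 ≤ p) (hp1 : p ≤ 1) :
    (a + b) ^ p ≤ a ^ p + b ^ p := by
  have h := NNReal.coe_le_coe.2 (NNReal.rpow_add_le_add_rpow a.toNNReal b.toNNReal hp hp1)
  push_cast at h
  rwa [Real.coe_toNNReal a ha, Real.coe_toNNReal b hb] at h

lemma my_rpow_sub_le {p a b : ℝ} (hb : 0 ≤ b) (hba : b ≤ a) (hp : 0 ≤ p) (hp1 : p ≤ 1) :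
    a ^ p - b ^ p ≤ (a - b) ^ p := by
  have h := my_rpow_add_le (sub_nonneg.2 hba) hb hp hp1
  rw [sub_add_cancel] at h
  linarith

lemma my_abs_rpow_sub_le {p a b : ℝ} (ha : 0 ≤ a) (hb : 0 ≤ b) (hp : 0 ≤ p) (hp1 : p ≤ 1) :
    |a ^ p - b ^ p| ≤ |a - b| ^ p := by
  rcases le_total b a with h | h
  · rw [abs_of_nonneg (sub_nonneg.2 h), abs_of_nonneg
      (sub_nonneg.2 (Real.rpow_le_rpow hb h hp))]
    exact my_rpow_sub_le hb h hp hp1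
  · rw [abs_of_nonpos (sub_nonpos.2 h), abs_of_nonpos
      (sub_nonpos.2 (Real.rpow_le_rpow ha h hp)), neg_sub]
    have := my_rpow_sub_le ha h hp hp1
    rwa [show b - a = -(a-b) by ring] at this

/-- Bernoulli-type: `u^k ≤ 1 + k(u-1)` for `u ≥ 0`, `0 ≤ k ≤ 1`. -/
lemma my_rpow_le_one_add_mul {u k : ℝ} (hu0 : 0 ≤ u) (hk0 : 0 ≤ k) (hk1 : k ≤ 1) :
    u ^ k ≤ 1 + k * (u - 1) := by
  have h := rpow_one_add_le_one_add_mul_self (s := u - 1) (by linarith) hk0 hk1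
  have e : (1 : ℝ) + (u - 1) = u := by ring
  rwa [e] at h

/-- `Y^k - X^k ≥ k Y^{k-1}(Y-X)` for `0 ≤ X ≤ Y`. -/
lemma my_rpow_sub_rpow_ge {X Y k : ℝ} (hX : 0 ≤ X) (hXY : X ≤ Y) (hk0 : 0 ≤ k) (hk1 : k ≤ 1) :
    k * Y ^ (k - 1) * (Y - X) ≤ Y ^ k - X ^ k := by
  rcases eq_or_lt_of_le (hX.trans hXY) with hY | hY
  · have hX0 : X = 0 := le_antisymm (hXY.trans hY.symm.le) hX
    simp [← hY, hX0]
  have hu0 : 0 ≤ X / Y := div_nonneg hX hY.le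
  have h := my_rpow_le_one_add_mul hu0 hk0 hk1
  have hYk : 0 < Y ^ k := Real.rpow_pos_of_pos hY k
  have hXk : X ^ k = (X / Y) ^ k * Y ^ k := by
    rw [Real.div_rpow hX hY.le, div_mul_cancel₀]
    exact (Real.rpow_pos_of_pos hY k).ne'
  have h2 : X ^ k ≤ (1 + k * (X / Y - 1)) * Y ^ k := by
    rw [hXk]
    exact mul_le_mul_of_nonneg_right h hYk.le
  have hYk1 : Y ^ (k - 1) * Y = Y ^ k := by
    nth_rewrite 2 [← Real.rpow_one Y]
    rw [← Real.rpow_add hY, sub_add_cancel]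
  have h3 : (1 + k * (X / Y - 1)) * Y ^ k = Y ^ k - k * Y ^ (k - 1) * (Y - X) := by
    have hYne : Y ≠ 0 := hY.ne'
    field_simp
    rw [← hYk1]
    ring
  rw [h3] at h2
  linarith

end Helpers
open Real Finset

section ProdLemmas
variable {ι : Type*} [DecidableEq ι]

/-- `2r ≤ p + q` when `r² ≤ pq`, all nonneg. -/
lemma my_amgm {p q r : ℝ} (hp : 0 ≤ p) (hq : 0 ≤ q) (hr : 0 ≤ r) (h : r ^ 2 ≤ p * q) :
    2 * r ≤ p + q := by nlinarith [sq_nonneg (p - q), sq_nonneg (p + q - 2 * r)]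

/-- Telescoping bound: `|∏u - ∏v| ≤ ∑|u - v|` for values in `[0,1]`. -/
lemma my_abs_prod_sub_prod_le (S : Finset ι) (u v : ι → ℝ)
    (hu : ∀ i ∈ S, 0 ≤ u i ∧ u i ≤ 1) (hv : ∀ i ∈ S, 0 ≤ v i ∧ v i ≤ 1) :
    |∏ i ∈ S, u i - ∏ i ∈ S, v i| ≤ ∑ i ∈ S, |u i - v i| := by
  induction S using Finset.induction_on with
  | empty => simp
  | insert j S hj ih =>
    have hu' := fun i hi => hu i (Finset.mem_insert_of_mem hi)
    have hv' := fun i hi => hv i (Finset.mem_insert_of_mem hi)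
    have huj := hu j (Finset.mem_insert_self j S)
    have hvj := hv j (Finset.mem_insert_self j S)
    rw [Finset.prod_insert hj, Finset.prod_insert hj, Finset.sum_insert hj]
    have hPu : 0 ≤ ∏ i ∈ S, u i ∧ ∏ i ∈ S, u i ≤ 1 :=
      ⟨Finset.prod_nonneg fun i hi => (hu' i hi).1,
       Finset.prod_le_one (fun i hi => (hu' i hi).1) fun i hi => (hu' i hi).2⟩
    have hPv : 0 ≤ ∏ i ∈ S, v i ∧ ∏ i ∈ S, v i ≤ 1 :=
      ⟨Finset.prod_nonneg fun i hi => (hv' i hi).1,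
       Finset.prod_le_one (fun i hi => (hv' i hi).1) fun i hi => (hv' i hi).2⟩
    have key : u j * ∏ i ∈ S, u i - v j * ∏ i ∈ S, v i
        = u j * (∏ i ∈ S, u i - ∏ i ∈ S, v i) + (u j - v j) * ∏ i ∈ S, v i := by ring
    rw [key]
    calc |u j * (∏ i ∈ S, u i - ∏ i ∈ S, v i) + (u j - v j) * ∏ i ∈ S, v i|
        ≤ |u j * (∏ i ∈ S, u i - ∏ i ∈ S, v i)| + |(u j - v j) * ∏ i ∈ S, v i| := abs_add_le _ _
      _ ≤ 1 * |∏ i ∈ S, u i - ∏ i ∈ S, v i| + |u j - v j| * 1 := by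
          rw [abs_mul, abs_mul, abs_of_nonneg huj.1, abs_of_nonneg hPv.1]
          gcongr
          exacts [huj.2, hPv.2]
      _ ≤ |u j - v j| + ∑ i ∈ S, |u i - v i| := by
          rw [one_mul, mul_one]
          have := ih hu' hv'
          linarith

/-- Lower telescoping: `∏u - ∏v ≥ m^|S| ∑ (u-v)` when `m ≤ v ≤ u ≤ 1`, `0 ≤ m ≤ 1`. -/
lemma my_prod_sub_prod_ge (S : Finset ι) (u v : ι → ℝ) (m : ℝ) (hm0 : 0 ≤ m) (hm1 : m ≤ 1)
    (h : ∀ i ∈ S, m ≤ v i ∧ v i ≤ u i ∧ u i ≤ 1) :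
    m ^ S.card * ∑ i ∈ S, (u i - v i) ≤ ∏ i ∈ S, u i - ∏ i ∈ S, v i := by
  induction S using Finset.induction_on with
  | empty => simp
  | insert j S hj ih =>
    have h' := fun i hi => h i (Finset.mem_insert_of_mem hi)
    have hj' := h j (Finset.mem_insert_self j S)
    rw [Finset.prod_insert hj, Finset.prod_insert hj, Finset.sum_insert hj,
      Finset.card_insert_of_notMem hj]
    have hPv_lb : m ^ S.card ≤ ∏ i ∈ S, v i := by
      calc m ^ S.card = ∏ _i ∈ S, m := by rw [Finset.prod_const]
        _ ≤ ∏ i ∈ S, v i := Finset.prod_le_prod (fun i _ => hm0) fun i hi => (h' i hi).1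
    have hPuv : ∏ i ∈ S, v i ≤ ∏ i ∈ S, u i :=
      Finset.prod_le_prod (fun i hi => hm0.trans (h' i hi).1) fun i hi => (h' i hi).2.1
    have ihS := ih h'
    have hsum : 0 ≤ ∑ i ∈ S, (u i - v i) :=
      Finset.sum_nonneg fun i hi => sub_nonneg.2 (h' i hi).2.1
    have key : u j * ∏ i ∈ S, u i - v j * ∏ i ∈ S, v i
        = u j * (∏ i ∈ S, u i - ∏ i ∈ S, v i) + (u j - v j) * ∏ i ∈ S, v i := by ring
    rw [key]
    have hmu : m ≤ u j := hj'.1.trans hj'.2.1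
    have hmcard : (0:ℝ) ≤ m ^ S.card := pow_nonneg hm0 _
    have hmcard1 : m ^ S.card ≤ 1 := pow_le_one₀ hm0 hm1
    have h1 : m * (m ^ S.card * ∑ i ∈ S, (u i - v i))
        ≤ u j * (∏ i ∈ S, u i - ∏ i ∈ S, v i) :=
      mul_le_mul hmu ihS (by positivity) (hm0.trans hmu)
    have h2 : (u j - v j) * m ^ S.card ≤ (u j - v j) * ∏ i ∈ S, v i :=
      mul_le_mul_of_nonneg_left hPv_lb (sub_nonneg.2 hj'.2.1)
    have h3 : m ^ (S.card + 1) * ((u j - v j) + ∑ i ∈ S, (u i - v i))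
        ≤ m * (m ^ S.card * ∑ i ∈ S, (u i - v i)) + (u j - v j) * m ^ S.card := by
      have huv : 0 ≤ u j - v j := sub_nonneg.2 hj'.2.1
      have e : m ^ (S.card + 1) = m * m ^ S.card := by ring
      rw [e]
      nlinarith [mul_le_of_le_one_left (mul_nonneg hmcard huv) hm1]
    linarith

lemma my_two_prod_le (S : Finset ι) (a b c : ι → ℝ)
    (h : ∀ i ∈ S, (0 ≤ a i ∧ a i ≤ 1) ∧ (0 ≤ b i ∧ b i ≤ 1) ∧ 0 ≤ c i ∧ c i ^ 2 ≤ a i * b i) :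
    2 * ∏ i ∈ S, c i ≤ ∏ i ∈ S, a i + ∏ i ∈ S, b i := by
  have hPc : 0 ≤ ∏ i ∈ S, c i := Finset.prod_nonneg fun i hi => (h i hi).2.2.1
  have hsq : (∏ i ∈ S, c i) ^ 2 ≤ (∏ i ∈ S, a i) * (∏ i ∈ S, b i) := by
    rw [← Finset.prod_pow, ← Finset.prod_mul_distrib]
    exact Finset.prod_le_prod (fun i hi => sq_nonneg _) fun i hi => (h i hi).2.2.2
  exact my_amgm (Finset.prod_nonneg fun i hi => (h i hi).1.1)
    (Finset.prod_nonneg fun i hi => (h i hi).2.1.1) hPc hsq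

lemma my_sum_incr_ub (S : Finset ι) (a b c : ι → ℝ)
    (h : ∀ i ∈ S, (0 ≤ a i ∧ a i ≤ 1) ∧ (0 ≤ b i ∧ b i ≤ 1) ∧ 0 ≤ c i ∧ c i ^ 2 ≤ a i * b i) :
    ∏ i ∈ S, a i + ∏ i ∈ S, b i - 2 * ∏ i ∈ S, c i ≤
      ∑ i ∈ S, (a i + b i - 2 * c i) + (∑ i ∈ S, |b i - a i|) * (∑ i ∈ S, |b i - c i|) := by
  induction S using Finset.induction_on with
  | empty => norm_num
  | insert j S hj ih =>
    have h' := fun i hi => h i (Finset.mem_insert_of_mem hi)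
    have hj' := h j (Finset.mem_insert_self j S)
    obtain ⟨⟨haj0, haj1⟩, ⟨hbj0, hbj1⟩, hcj0, hcj2⟩ := hj'
    have hcj1 : c j ≤ 1 := by nlinarith
    have hc1 : ∀ i ∈ S, c i ≤ 1 := fun i hi => by
      obtain ⟨⟨h1, h2⟩, ⟨h3, h4⟩, h5, h6⟩ := h' i hi; nlinarith
    rw [Finset.prod_insert hj, Finset.prod_insert hj, Finset.prod_insert hj,
      Finset.sum_insert hj, Finset.sum_insert hj, Finset.sum_insert hj]
    set Pa := ∏ i ∈ S, a i with hPa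
    set Pb := ∏ i ∈ S, b i with hPb
    set Pc := ∏ i ∈ S, c i with hPc
    have hPa0 : 0 ≤ Pa := Finset.prod_nonneg fun i hi => (h' i hi).1.1
    have hPb0 : 0 ≤ Pb := Finset.prod_nonneg fun i hi => (h' i hi).2.1.1
    have hPc0 : 0 ≤ Pc := Finset.prod_nonneg fun i hi => (h' i hi).2.2.1
    have hPa1 : Pa ≤ 1 :=
      Finset.prod_le_one (fun i hi => (h' i hi).1.1) fun i hi => (h' i hi).1.2
    have hPb1 : Pb ≤ 1 :=
      Finset.prod_le_one (fun i hi => (h' i hi).2.1.1) fun i hi => (h' i hi).2.1.2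
    have hPc1 : Pc ≤ 1 :=
      Finset.prod_le_one (fun i hi => (h' i hi).2.2.1) hc1
    have hIS : 0 ≤ Pa + Pb - 2 * Pc := by
      have := my_two_prod_le S a b c h'
      simp only [← hPa, ← hPb, ← hPc] at this
      linarith
    have hej : 0 ≤ a j + b j - 2 * c j := by
      have := my_amgm haj0 hbj0 hcj0 hcj2
      linarith
    have habs : |Pb - Pc| ≤ ∑ i ∈ S, |b i - c i| :=
      my_abs_prod_sub_prod_le S b c (fun i hi => (h' i hi).2.1)
        (fun i hi => ⟨(h' i hi).2.2.1, hc1 i hi⟩)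
    have key : a j * Pa + b j * Pb - 2 * (c j * Pc)
        = a j * (Pa + Pb - 2 * Pc) + (b j - a j) * (Pb - Pc) + (a j + b j - 2 * c j) * Pc := by
      ring
    rw [key]
    have t1 : a j * (Pa + Pb - 2 * Pc) ≤ Pa + Pb - 2 * Pc := by
      nlinarith
    have t2 : (b j - a j) * (Pb - Pc) ≤ |b j - a j| * ∑ i ∈ S, |b i - c i| := by
      calc (b j - a j) * (Pb - Pc) ≤ |(b j - a j) * (Pb - Pc)| := le_abs_self _
        _ = |b j - a j| * |Pb - Pc| := abs_mul _ _
        _ ≤ |b j - a j| * ∑ i ∈ S, |b i - c i| :=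
            mul_le_mul_of_nonneg_left habs (abs_nonneg _)
    have t3 : (a j + b j - 2 * c j) * Pc ≤ a j + b j - 2 * c j := by
      nlinarith
    have ihS := ih h'
    have hsum_nonneg1 : 0 ≤ ∑ i ∈ S, |b i - a i| :=
      Finset.sum_nonneg fun i _ => abs_nonneg _
    have hsum_nonneg2 : 0 ≤ ∑ i ∈ S, |b i - c i| :=
      Finset.sum_nonneg fun i _ => abs_nonneg _
    have hexp : (|b j - a j| + ∑ i ∈ S, |b i - a i|) * (|b j - c j| + ∑ i ∈ S, |b i - c i|)
        ≥ (∑ i ∈ S, |b i - a i|) * (∑ i ∈ S, |b i - c i|)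
          + |b j - a j| * ∑ i ∈ S, |b i - c i| := by
      nlinarith [abs_nonneg (b j - a j), abs_nonneg (b j - c j),
        mul_nonneg (abs_nonneg (b j - a j)) (abs_nonneg (b j - c j))]
    linarith
open Real

section OneDAux

lemma my_rpow_twice {z : ℝ} (p : ℝ) (hz : 0 ≤ z) (hp : 0 < p) :
    z ^ (2 * p) = (z ^ p) ^ 2 := by
  rcases eq_or_lt_of_le hz with rfl | hz'
  · rw [Real.zero_rpow (by positivity : (0:ℝ) < 2 * p).ne', Real.zero_rpow hp.ne']
    ring
  · rw [show 2 * p = p + p by ring, Real.rpow_add hz', sq]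

lemma my_rpow_ge_eps_sq {ε x p : ℝ} (hε0 : 0 < ε) (hx : ε ≤ x) (hx1 : x ≤ 1)
    (hp : 0 < p) (hp2 : p ≤ 2) : ε ^ 2 ≤ x ^ p := by
  have hx0 : 0 < x := hε0.trans_le hx
  have h1 : x ^ (2:ℝ) ≤ x ^ p := Real.rpow_le_rpow_of_exponent_ge hx0 hx1 hp2
  have h2 : x ^ (2:ℝ) = x ^ 2 := by
    rw [show (2:ℝ) = ((2:ℕ):ℝ) by norm_num, Real.rpow_natCast]
  calc ε ^ 2 ≤ x ^ 2 := by nlinarith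
    _ = x ^ (2:ℝ) := h2.symm
    _ ≤ x ^ p := h1

lemma my_two_cancel {k : ℝ} : (2:ℝ) ^ (-k) * (2:ℝ) ^ k = 1 := by
  rw [← Real.rpow_add (by norm_num : (0:ℝ) < 2), neg_add_cancel, Real.rpow_zero]

/-- Improved Hölder bound away from 0: `|x^h - y^h| ≤ (1-ε)^{1-h} |y-x|^h` on `[ε,1]`. -/
lemma my_holder_eps_aux {ε h x y : ℝ} (hε0 : 0 < ε) (hh0 : 0 < h) (hh1 : h < 1)
    (hx : ε ≤ x) (hy1 : y ≤ 1) (hxy : x ≤ y) :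
    y ^ h - x ^ h ≤ (1 - ε) ^ (1 - h) * (y - x) ^ h := by
  rcases eq_or_lt_of_le hxy with rfl | hxy'
  · simp only [sub_self]
    rw [Real.zero_rpow hh0.ne']
    simp
  have hx0 : 0 < x := hε0.trans_le hx
  have hy0 : 0 < y := hx0.trans hxy'
  have hd0 : 0 < y - x := sub_pos.2 hxy'
  -- step 1 : y^h - x^h ≤ (y - x) * y^(h-1)
  have e1 : x ^ h = x * x ^ (h - 1) := by
    nth_rewrite 2 [← Real.rpow_one x]
    rw [← Real.rpow_add hx0, add_sub_cancel]
  have e2 : y ^ h = y * y ^ (h - 1) := by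
    nth_rewrite 2 [← Real.rpow_one y]
    rw [← Real.rpow_add hy0, add_sub_cancel]
  have m1 : y ^ (h - 1) ≤ x ^ (h - 1) :=
    Real.rpow_le_rpow_of_nonpos hx0 hxy (by linarith)
  have step1 : y ^ h - x ^ h ≤ (y - x) * y ^ (h - 1) := by
    rw [e1, e2]
    have : x * y ^ (h - 1) ≤ x * x ^ (h - 1) := mul_le_mul_of_nonneg_left m1 hx0.le
    nlinarith
  -- step 2 : (y - x) * y^(h-1) = ((y-x)/y)^(1-h) * (y-x)^h
  have step2 : (y - x) * y ^ (h - 1) = ((y - x) / y) ^ (1 - h) * (y - x) ^ h := by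
    rw [Real.div_rpow hd0.le hy0.le]
    rw [div_mul_eq_mul_div, ← Real.rpow_add hd0, sub_add_cancel, Real.rpow_one]
    rw [show h - 1 = -(1 - h) by ring, Real.rpow_neg hy0.le, div_eq_mul_inv]
  -- step 3 : (y-x)/y ≤ 1 - ε
  have step3 : (y - x) / y ≤ 1 - ε := by
    rw [div_le_iff₀ hy0]
    nlinarith
  have step4 : ((y - x) / y) ^ (1 - h) ≤ (1 - ε) ^ (1 - h) :=
    Real.rpow_le_rpow (by positivity) step3 (by linarith)
  calc y ^ h - x ^ h ≤ (y - x) * y ^ (h - 1) := step1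
    _ = ((y - x) / y) ^ (1 - h) * (y - x) ^ h := step2
    _ ≤ (1 - ε) ^ (1 - h) * (y - x) ^ h :=
        mul_le_mul_of_nonneg_right step4 (Real.rpow_nonneg hd0.le h)

lemma my_holder_eps {ε h x y : ℝ} (hε0 : 0 < ε) (hh0 : 0 < h) (hh1 : h < 1)
    (hx : ε ≤ x) (hx1 : x ≤ 1) (hy : ε ≤ y) (hy1 : y ≤ 1) :
    |x ^ h - y ^ h| ≤ (1 - ε) ^ (1 - h) * |y - x| ^ h := by
  rcases le_total x y with hxy | hxy
  · rw [abs_of_nonpos (sub_nonpos.2 (Real.rpow_le_rpow (hε0.trans_le hx).le hxy hh0.le)),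
      abs_of_nonneg (sub_nonneg.2 hxy), neg_sub]
    exact my_holder_eps_aux hε0 hh0 hh1 hx hy1 hxy
  · rw [abs_of_nonneg (sub_nonneg.2 (Real.rpow_le_rpow (hε0.trans_le hy).le hxy hh0.le)),
      abs_of_nonpos (sub_nonpos.2 hxy), neg_sub]
    exact my_holder_eps_aux hε0 hh0 hh1 hy hx1 hxy

end OneDAux
open Real

section OneDCore

variable {ε h k x y : ℝ}

-- C lower bound, ordered case
lemma my_C_lb_aux (hε0 : 0 < ε) (hε1 : ε < 1) (hh0 : 0 < h) (hh1 : h < 1)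
    (hk0 : 0 < k) (hk1 : k ≤ 1) (hx : ε ≤ x) (hx1 : x ≤ 1) (hy : ε ≤ y) (hy1 : y ≤ 1)
    (hxy : x ≤ y) :
    k / 2 * ε ^ 2 ≤ 2 ^ (-k) * ((x ^ (2*h) + y ^ (2*h)) ^ k - |y - x| ^ (2*h*k)) := by
  have hx0 : 0 < x := hε0.trans_le hx
  have hd0 : 0 ≤ y - x := sub_nonneg.2 hxy
  have habs : |y - x| = y - x := abs_of_nonneg hd0
  have hd1 : y - x ≤ 1 := by linarith
  have hdy : y - x ≤ y := by linarith
  have h2h : 0 < 2 * h := by linarith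
  have hX0 : (0:ℝ) ≤ (y - x) ^ (2*h) := Real.rpow_nonneg hd0 _
  have hXY : (y - x) ^ (2*h) ≤ ε ^ (2*h) + (y - x) ^ (2*h) :=
    le_add_of_nonneg_left (Real.rpow_nonneg hε0.le _)
  have hY0 : (0:ℝ) < ε ^ (2*h) + (y - x) ^ (2*h) :=
    add_pos_of_pos_of_nonneg (Real.rpow_pos_of_pos hε0 _) hX0
  have hY2 : ε ^ (2*h) + (y - x) ^ (2*h) ≤ 2 := by
    have h1 : ε ^ (2*h) ≤ 1 := Real.rpow_le_one hε0.le hε1.le h2h.le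
    have h2 : (y - x) ^ (2*h) ≤ 1 := Real.rpow_le_one hd0 hd1 h2h.le
    linarith
  have hYS : ε ^ (2*h) + (y - x) ^ (2*h) ≤ x ^ (2*h) + y ^ (2*h) :=
    add_le_add (Real.rpow_le_rpow hε0.le hx h2h.le) (Real.rpow_le_rpow hd0 hdy h2h.le)
  have hSk : (ε ^ (2*h) + (y - x) ^ (2*h)) ^ k ≤ (x ^ (2*h) + y ^ (2*h)) ^ k :=
    Real.rpow_le_rpow hY0.le hYS hk0.le
  have key := my_rpow_sub_rpow_ge (X := (y - x) ^ (2*h)) (Y := ε ^ (2*h) + (y - x) ^ (2*h))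
    hX0 hXY hk0.le hk1
  have hYk1 : (2:ℝ) ^ (k - 1) ≤ (ε ^ (2*h) + (y - x) ^ (2*h)) ^ (k - 1) :=
    Real.rpow_le_rpow_of_nonpos hY0 hY2 (by linarith)
  have hεh : (0:ℝ) ≤ ε ^ (2*h) := Real.rpow_nonneg hε0.le _
  have key2 : k * 2 ^ (k - 1) * ε ^ (2*h)
      ≤ (ε ^ (2*h) + (y - x) ^ (2*h)) ^ k - ((y - x) ^ (2*h)) ^ k := by
    have e : ε ^ (2*h) + (y - x) ^ (2*h) - (y - x) ^ (2*h) = ε ^ (2*h) := by ring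
    rw [e] at key
    calc k * 2 ^ (k - 1) * ε ^ (2*h)
        ≤ k * (ε ^ (2*h) + (y - x) ^ (2*h)) ^ (k - 1) * ε ^ (2*h) := by
          have := mul_le_mul_of_nonneg_left hYk1 hk0.le
          exact mul_le_mul_of_nonneg_right this hεh
      _ ≤ _ := key
  have hD : |y - x| ^ (2*h*k) = ((y - x) ^ (2*h)) ^ k := by
    rw [habs, ← Real.rpow_mul hd0]
  have key3 : k * 2 ^ (k - 1) * ε ^ (2*h)
      ≤ (x ^ (2*h) + y ^ (2*h)) ^ k - |y - x| ^ (2*h*k) := by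
    rw [hD]; linarith
  have h2k : (0:ℝ) < (2:ℝ) ^ (-k) := Real.rpow_pos_of_pos two_pos _
  have final : 2 ^ (-k) * (k * 2 ^ (k - 1) * ε ^ (2*h))
      ≤ 2 ^ (-k) * ((x ^ (2*h) + y ^ (2*h)) ^ k - |y - x| ^ (2*h*k)) :=
    mul_le_mul_of_nonneg_left key3 h2k.le
  have e2 : (2:ℝ) ^ (-k) * (2:ℝ) ^ (k - 1) = 1 / 2 := by
    rw [← Real.rpow_add two_pos, show -k + (k - 1) = (-1:ℝ) by ring, Real.rpow_neg_one]
    norm_num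
  have e3 : (2:ℝ) ^ (-k) * (k * 2 ^ (k - 1) * ε ^ (2*h)) = k / 2 * ε ^ (2*h) := by
    have : (2:ℝ) ^ (-k) * (k * 2 ^ (k - 1) * ε ^ (2*h))
        = ((2:ℝ) ^ (-k) * (2:ℝ) ^ (k - 1)) * k * ε ^ (2*h) := by ring
    rw [this, e2]; ring
  have e4 : k / 2 * ε ^ 2 ≤ k / 2 * ε ^ (2*h) := by
    have := my_rpow_ge_eps_sq hε0 (le_refl ε) hε1.le h2h (by linarith)
    have hk2 : (0:ℝ) ≤ k / 2 := by linarith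
    exact mul_le_mul_of_nonneg_left this hk2
  linarith [final, e3.symm.trans_le final]

lemma my_C_lb (hε0 : 0 < ε) (hε1 : ε < 1) (hh0 : 0 < h) (hh1 : h < 1)
    (hk0 : 0 < k) (hk1 : k ≤ 1) (hx : ε ≤ x) (hx1 : x ≤ 1) (hy : ε ≤ y) (hy1 : y ≤ 1) :
    k / 2 * ε ^ 2 ≤ 2 ^ (-k) * ((x ^ (2*h) + y ^ (2*h)) ^ k - |y - x| ^ (2*h*k)) := by
  rcases le_total x y with hxy | hxy
  · exact my_C_lb_aux hε0 hε1 hh0 hh1 hk0 hk1 hx hx1 hy hy1 hxy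
  · have := my_C_lb_aux hε0 hε1 hh0 hh1 hk0 hk1 hy hy1 hx hx1 hxy
    rwa [add_comm (y ^ (2*h)) (x ^ (2*h)), abs_sub_comm x y] at this

-- G - C upper bound
lemma my_GC_ub (hh0 : 0 < h) (hk0 : 0 < k) (hk1 : k ≤ 1) (hx0 : 0 ≤ x) (hy0 : 0 ≤ y) :
    (x*y) ^ (h*k) - 2 ^ (-k) * ((x ^ (2*h) + y ^ (2*h)) ^ k - |y - x| ^ (2*h*k))
      ≤ 2 ^ (-k) * |y - x| ^ (2*h*k) := by
  have hxh : (0:ℝ) ≤ x ^ h := Real.rpow_nonneg hx0 _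
  have hyh : (0:ℝ) ≤ y ^ h := Real.rpow_nonneg hy0 _
  have hG : (x*y) ^ (h*k) = (x ^ h * y ^ h) ^ k := by
    rw [Real.rpow_mul (mul_nonneg hx0 hy0), Real.mul_rpow hx0 hy0]
  have hsq : 2 * (x ^ h * y ^ h) ≤ x ^ (2*h) + y ^ (2*h) := by
    have ex : x ^ (2*h) = (x ^ h) ^ 2 := my_rpow_twice h hx0 hh0
    have ey : y ^ (2*h) = (y ^ h) ^ 2 := my_rpow_twice h hy0 hh0
    rw [ex, ey]
    nlinarith [sq_nonneg (x ^ h - y ^ h)]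
  have h2k : (0:ℝ) < (2:ℝ) ^ (-k) := Real.rpow_pos_of_pos two_pos _
  have hGle : (x*y) ^ (h*k) ≤ 2 ^ (-k) * (x ^ (2*h) + y ^ (2*h)) ^ k := by
    have h1 : (2 * (x ^ h * y ^ h)) ^ k ≤ (x ^ (2*h) + y ^ (2*h)) ^ k :=
      Real.rpow_le_rpow (by positivity) hsq hk0.le
    have h2 : (2 * (x ^ h * y ^ h)) ^ k = 2 ^ k * (x ^ h * y ^ h) ^ k :=
      Real.mul_rpow (by norm_num) (by positivity)
    have h3 : 2 ^ (-k) * (2 * (x ^ h * y ^ h)) ^ k = (x ^ h * y ^ h) ^ k := by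
      rw [h2, ← mul_assoc, my_two_cancel, one_mul]
    rw [hG, ← h3]
    exact mul_le_mul_of_nonneg_left h1 h2k.le
  have e : 2 ^ (-k) * ((x ^ (2*h) + y ^ (2*h)) ^ k - |y - x| ^ (2*h*k))
      = 2 ^ (-k) * (x ^ (2*h) + y ^ (2*h)) ^ k - 2 ^ (-k) * |y - x| ^ (2*h*k) := by ring
  rw [e]
  linarith

-- G - C lower bound
lemma my_GC_lb (hε0 : 0 < ε) (hε1 : ε < 1) (hh0 : 0 < h) (hh1 : h < 1)
    (hk0 : 0 < k) (hk1 : k ≤ 1) (hx : ε ≤ x) (hx1 : x ≤ 1) (hy : ε ≤ y) (hy1 : y ≤ 1) :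
    2 ^ (-k) * (1 - (1-ε) ^ (2*k*(1-h))) * |y - x| ^ (2*h*k)
      ≤ (x*y) ^ (h*k) - 2 ^ (-k) * ((x ^ (2*h) + y ^ (2*h)) ^ k - |y - x| ^ (2*h*k)) := by
  have hx0 : 0 < x := hε0.trans_le hx
  have hy0 : 0 < y := hε0.trans_le hy
  have hxh : (0:ℝ) ≤ x ^ h := Real.rpow_nonneg hx0.le _
  have hyh : (0:ℝ) ≤ y ^ h := Real.rpow_nonneg hy0.le _
  have hd0 : (0:ℝ) ≤ |y - x| := abs_nonneg _
  set d := |y - x| with hdd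
  set S := x ^ (2*h) + y ^ (2*h) with hSS
  set P := 2 * (x ^ h * y ^ h) with hPP
  have hP0 : 0 ≤ P := by positivity
  have hPS : P ≤ S := by
    have ex : x ^ (2*h) = (x ^ h) ^ 2 := my_rpow_twice h hx0.le hh0
    have ey : y ^ (2*h) = (y ^ h) ^ 2 := my_rpow_twice h hy0.le hh0
    rw [hSS, hPP, ex, ey]
    nlinarith [sq_nonneg (x ^ h - y ^ h)]
  -- S - P = (x^h - y^h)^2
  have hSP : S - P = (x ^ h - y ^ h) ^ 2 := by
    have ex : x ^ (2*h) = (x ^ h) ^ 2 := my_rpow_twice h hx0.le hh0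
    have ey : y ^ (2*h) = (y ^ h) ^ 2 := my_rpow_twice h hy0.le hh0
    rw [hSS, hPP, ex, ey]; ring
  -- S^k - P^k ≤ (S-P)^k = |x^h - y^h|^(2k)
  have step1 : S ^ k - P ^ k ≤ |x ^ h - y ^ h| ^ (2*k) := by
    have h1 : S ^ k - P ^ k ≤ (S - P) ^ k := my_rpow_sub_le hP0 hPS hk0.le hk1
    have h2 : (S - P) ^ k = |x ^ h - y ^ h| ^ (2*k) := by
      rw [hSP, ← sq_abs, ← Real.rpow_natCast |x ^ h - y ^ h| 2, ← Real.rpow_mul (abs_nonneg _)]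
      norm_num
    linarith [h2 ▸ h1]
  -- |x^h - y^h|^(2k) ≤ (1-ε)^(2k(1-h)) * d^(2hk)
  have step2 : |x ^ h - y ^ h| ^ (2*k) ≤ (1-ε) ^ (2*k*(1-h)) * d ^ (2*h*k) := by
    have hH := my_holder_eps hε0 hh0 hh1 hx hx1 hy hy1
    have hrhs0 : (0:ℝ) ≤ (1 - ε) ^ (1 - h) * d ^ h :=
      mul_nonneg (Real.rpow_nonneg (by linarith) _) (Real.rpow_nonneg hd0 _)
    have h1 : |x ^ h - y ^ h| ^ (2*k) ≤ ((1-ε) ^ (1-h) * d ^ h) ^ (2*k) :=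
      Real.rpow_le_rpow (abs_nonneg _) hH (by linarith)
    have h2 : ((1-ε) ^ (1-h) * d ^ h) ^ (2*k)
        = ((1-ε) ^ (1-h)) ^ (2*k) * (d ^ h) ^ (2*k) :=
      Real.mul_rpow (Real.rpow_nonneg (by linarith) _) (Real.rpow_nonneg hd0 _)
    have h3 : ((1-ε) ^ (1-h)) ^ (2*k) = (1-ε) ^ (2*k*(1-h)) := by
      rw [← Real.rpow_mul (by linarith : (0:ℝ) ≤ 1 - ε)]
      ring_nf
    have h4 : (d ^ h) ^ (2*k) = d ^ (2*h*k) := by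
      rw [← Real.rpow_mul hd0]
      ring_nf
    calc |x ^ h - y ^ h| ^ (2*k) ≤ ((1-ε) ^ (1-h) * d ^ h) ^ (2*k) := h1
      _ = (1-ε) ^ (2*k*(1-h)) * d ^ (2*h*k) := by rw [h2, h3, h4]
  -- G = 2^(-k) * P^k
  have hG : (x*y) ^ (h*k) = 2 ^ (-k) * P ^ k := by
    have h2 : P ^ k = 2 ^ k * (x ^ h * y ^ h) ^ k := by
      rw [hPP]; exact Real.mul_rpow (by norm_num) (by positivity)
    rw [h2, ← mul_assoc, my_two_cancel, one_mul,
      Real.rpow_mul (mul_nonneg hx0.le hy0.le), Real.mul_rpow hx0.le hy0.le]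
  have h2k : (0:ℝ) < (2:ℝ) ^ (-k) := Real.rpow_pos_of_pos two_pos _
  have key : S ^ k - d ^ (2*h*k) ≤ P ^ k - (1 - (1-ε) ^ (2*k*(1-h))) * d ^ (2*h*k) := by
    have := step1.trans step2
    nlinarith [this]
  have expand : (x*y) ^ (h*k) - 2 ^ (-k) * (S ^ k - d ^ (2*h*k))
      = 2 ^ (-k) * (P ^ k - (S ^ k - d ^ (2*h*k))) := by
    rw [hG]; ring
  rw [expand]
  have final : 2 ^ (-k) * ((1 - (1-ε) ^ (2*k*(1-h))) * d ^ (2*h*k))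
      ≤ 2 ^ (-k) * (P ^ k - (S ^ k - d ^ (2*h*k))) := by
    apply mul_le_mul_of_nonneg_left _ h2k.le
    linarith
  linarith [final]

end OneDCore
open Real

section OneDMore

variable {ε h k x y : ℝ}

lemma my_base_lb {z p : ℝ} (hz0 : 0 < z) (hz1 : z ≤ 1) (hp1 : p ≤ 1) : z ≤ z ^ p := by
  have := Real.rpow_le_rpow_of_exponent_ge hz0 hz1 hp1
  rwa [Real.rpow_one] at this

lemma my_G_sq (hh0 : 0 < h) (hk0 : 0 < k) (hx0 : 0 ≤ x) (hy0 : 0 ≤ y) :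
    ((x * y) ^ (h * k)) ^ 2 = x ^ (2*h*k) * y ^ (2*h*k) := by
  have hhk0 : 0 < h * k := by positivity
  have ex : x ^ (2*h*k) = (x ^ (h*k)) ^ 2 := by
    rw [show (2:ℝ)*h*k = 2*(h*k) by ring, my_rpow_twice (h*k) hx0 hhk0]
  have ey : y ^ (2*h*k) = (y ^ (h*k)) ^ 2 := by
    rw [show (2:ℝ)*h*k = 2*(h*k) by ring, my_rpow_twice (h*k) hy0 hhk0]
  rw [Real.mul_rpow hx0 hy0, ex, ey]
  ring

lemma my_diag (hh0 : 0 < h) (hk0 : 0 < k) (hx0 : 0 ≤ x) :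
    (2:ℝ) ^ (-k) * ((x ^ (2*h) + x ^ (2*h)) ^ k - |x - x| ^ (2*h*k)) = x ^ (2*h*k) := by
  have h1 : |x - x| ^ (2*h*k) = 0 := by
    rw [sub_self, abs_zero, Real.zero_rpow (by positivity : (0:ℝ) < 2*h*k).ne']
  have h2 : x ^ (2*h) + x ^ (2*h) = 2 * x ^ (2*h) := by ring
  have h3 : (2 * x ^ (2*h)) ^ k = 2 ^ k * (x ^ (2*h)) ^ k :=
    Real.mul_rpow (by norm_num) (Real.rpow_nonneg hx0 _)
  have h4 : (x ^ (2*h)) ^ k = x ^ (2*h*k) := by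
    rw [← Real.rpow_mul hx0]
  rw [h1, h2, h3, h4, sub_zero, ← mul_assoc, my_two_cancel, one_mul]

lemma my_AB_ub (hh0 : 0 < h) (hh1 : h < 1) (hk0 : 0 < k) (hk1 : k ≤ 1)
    (hx0 : 0 ≤ x) (hx1 : x ≤ 1) (hy0 : 0 ≤ y) (hy1 : y ≤ 1) :
    |y ^ (2*h*k) - x ^ (2*h*k)| ≤ 2 * |y - x| ^ (h*k) := by
  have hhk0 : 0 < h * k := by positivity
  have hhk1 : h * k ≤ 1 := by nlinarith
  have ex : x ^ (2*h*k) = (x ^ (h*k)) ^ 2 := by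
    rw [show (2:ℝ)*h*k = 2*(h*k) by ring, my_rpow_twice (h*k) hx0 hhk0]
  have ey : y ^ (2*h*k) = (y ^ (h*k)) ^ 2 := by
    rw [show (2:ℝ)*h*k = 2*(h*k) by ring, my_rpow_twice (h*k) hy0 hhk0]
  have hxk : x ^ (h*k) ≤ 1 := Real.rpow_le_one hx0 hx1 hhk0.le
  have hyk : y ^ (h*k) ≤ 1 := Real.rpow_le_one hy0 hy1 hhk0.le
  have hxk0 : 0 ≤ x ^ (h*k) := Real.rpow_nonneg hx0 _
  have hyk0 : 0 ≤ y ^ (h*k) := Real.rpow_nonneg hy0 _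
  have habs : |y ^ (h*k) - x ^ (h*k)| ≤ |y - x| ^ (h*k) :=
    my_abs_rpow_sub_le hy0 hx0 hhk0.le hhk1
  calc |y ^ (2*h*k) - x ^ (2*h*k)|
      = |y ^ (h*k) - x ^ (h*k)| * |y ^ (h*k) + x ^ (h*k)| := by
        rw [ex, ey, ← abs_mul]; congr 1; ring
    _ ≤ |y - x| ^ (h*k) * 2 := by
        apply mul_le_mul habs _ (abs_nonneg _) (Real.rpow_nonneg (abs_nonneg _) _)
        rw [abs_of_nonneg (by linarith)]; linarith
    _ = 2 * |y - x| ^ (h*k) := by ring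

lemma my_BC_ub (hε0 : 0 < ε) (hh0 : 0 < h) (hh1 : h < 1) (hk0 : 0 < k) (hk1 : k ≤ 1)
    (hx : ε ≤ x) (hx1 : x ≤ 1) (hy : ε ≤ y) (hy1 : y ≤ 1) :
    |y ^ (2*h*k) - 2 ^ (-k) * ((x ^ (2*h) + y ^ (2*h)) ^ k - |y - x| ^ (2*h*k))|
      ≤ 2 * |y - x| ^ (h*k) := by
  have hx0 : (0:ℝ) ≤ x := (hε0.trans_le hx).le
  have hy0 : (0:ℝ) ≤ y := (hε0.trans_le hy).le
  have hd0 : (0:ℝ) ≤ |y - x| := abs_nonneg _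
  have hd1 : |y - x| ≤ 1 := by
    rw [abs_le]; constructor <;> linarith
  have h2h0 : 0 < 2 * h := by linarith
  have hhk0 : 0 < h * k := by positivity
  -- B = 2^(-k) * (2*y^(2h))^k
  have hB : y ^ (2*h*k) = 2 ^ (-k) * (2 * y ^ (2*h)) ^ k := by
    rw [Real.mul_rpow (by norm_num) (Real.rpow_nonneg hy0 _), ← mul_assoc, my_two_cancel,
      one_mul, ← Real.rpow_mul hy0]
  have h2k0 : (0:ℝ) < (2:ℝ) ^ (-k) := Real.rpow_pos_of_pos two_pos _
  have h2k1 : (2:ℝ) ^ (-k) ≤ 1 :=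
    Real.rpow_le_one_of_one_le_of_nonpos (by norm_num) (by linarith)
  -- |(2y^{2h})^k - S^k| ≤ |2y^{2h} - S|^k = |y^{2h} - x^{2h}|^k
  have step1 : |(2 * y ^ (2*h)) ^ k - (x ^ (2*h) + y ^ (2*h)) ^ k|
      ≤ |y ^ (2*h) - x ^ (2*h)| ^ k := by
    have := my_abs_rpow_sub_le (a := 2 * y ^ (2*h)) (b := x ^ (2*h) + y ^ (2*h))
      (by positivity) (by positivity) hk0.le hk1
    have e : 2 * y ^ (2*h) - (x ^ (2*h) + y ^ (2*h)) = y ^ (2*h) - x ^ (2*h) := by ring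
    rwa [e] at this
  -- |y^{2h} - x^{2h}| ≤ 2 |y-x|^h
  have step2 : |y ^ (2*h) - x ^ (2*h)| ≤ 2 * |y - x| ^ h := by
    have ex : x ^ (2*h) = (x ^ h) ^ 2 := my_rpow_twice h hx0 hh0
    have ey : y ^ (2*h) = (y ^ h) ^ 2 := my_rpow_twice h hy0 hh0
    have hxh1 : x ^ h ≤ 1 := Real.rpow_le_one hx0 hx1 hh0.le
    have hyh1 : y ^ h ≤ 1 := Real.rpow_le_one hy0 hy1 hh0.le
    have hxh0 : 0 ≤ x ^ h := Real.rpow_nonneg hx0 _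
    have hyh0 : 0 ≤ y ^ h := Real.rpow_nonneg hy0 _
    have habs : |y ^ h - x ^ h| ≤ |y - x| ^ h := my_abs_rpow_sub_le hy0 hx0 hh0.le hh1.le
    calc |y ^ (2*h) - x ^ (2*h)| = |y ^ h - x ^ h| * |y ^ h + x ^ h| := by
          rw [ex, ey, ← abs_mul]; congr 1; ring
      _ ≤ |y - x| ^ h * 2 := by
          apply mul_le_mul habs _ (abs_nonneg _) (Real.rpow_nonneg (abs_nonneg _) _)
          rw [abs_of_nonneg (by linarith)]; linarith
      _ = 2 * |y - x| ^ h := by ring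
  -- |y^{2h}-x^{2h}|^k ≤ 2^k |y-x|^{hk}
  have step3 : |y ^ (2*h) - x ^ (2*h)| ^ k ≤ 2 ^ k * |y - x| ^ (h*k) := by
    have h1 : |y ^ (2*h) - x ^ (2*h)| ^ k ≤ (2 * |y - x| ^ h) ^ k :=
      Real.rpow_le_rpow (abs_nonneg _) step2 hk0.le
    have h2 : (2 * |y - x| ^ h) ^ k = 2 ^ k * (|y - x| ^ h) ^ k :=
      Real.mul_rpow (by norm_num) (Real.rpow_nonneg hd0 _)
    have h3 : (|y - x| ^ h) ^ k = |y - x| ^ (h*k) := by rw [← Real.rpow_mul hd0]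
    rw [h2, h3] at h1
    exact h1
  -- d^{2hk} ≤ d^{hk}
  have step4 : |y - x| ^ (2*h*k) ≤ |y - x| ^ (h*k) := by
    apply Real.rpow_le_rpow_of_exponent_ge' hd0 hd1 (by positivity)
    nlinarith
  have hd2hk0 : (0:ℝ) ≤ |y - x| ^ (2*h*k) := Real.rpow_nonneg hd0 _
  have hdhk0 : (0:ℝ) ≤ |y - x| ^ (h*k) := Real.rpow_nonneg hd0 _
  -- assemble
  have expand : y ^ (2*h*k) - 2 ^ (-k) * ((x ^ (2*h) + y ^ (2*h)) ^ k - |y - x| ^ (2*h*k))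
      = 2 ^ (-k) * ((2 * y ^ (2*h)) ^ k - (x ^ (2*h) + y ^ (2*h)) ^ k)
        + 2 ^ (-k) * |y - x| ^ (2*h*k) := by
    rw [hB]; ring
  rw [expand]
  calc |2 ^ (-k) * ((2 * y ^ (2*h)) ^ k - (x ^ (2*h) + y ^ (2*h)) ^ k)
        + 2 ^ (-k) * |y - x| ^ (2*h*k)|
      ≤ |2 ^ (-k) * ((2 * y ^ (2*h)) ^ k - (x ^ (2*h) + y ^ (2*h)) ^ k)|
        + |2 ^ (-k) * |y - x| ^ (2*h*k)| := abs_add_le _ _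
    _ = 2 ^ (-k) * |(2 * y ^ (2*h)) ^ k - (x ^ (2*h) + y ^ (2*h)) ^ k|
        + 2 ^ (-k) * |y - x| ^ (2*h*k) := by
        rw [abs_mul, abs_mul, abs_of_nonneg h2k0.le, abs_of_nonneg hd2hk0]
    _ ≤ 1 * (2 ^ k * |y - x| ^ (h*k)) * 2 ^ (-k) + 1 * |y - x| ^ (h*k) := by
        have t1 : 2 ^ (-k) * |(2 * y ^ (2*h)) ^ k - (x ^ (2*h) + y ^ (2*h)) ^ k|
            ≤ 2 ^ (-k) * (2 ^ k * |y - x| ^ (h*k)) :=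
          mul_le_mul_of_nonneg_left (step1.trans step3) h2k0.le
        have t2 : 2 ^ (-k) * |y - x| ^ (2*h*k) ≤ 1 * |y - x| ^ (h*k) := by
          rw [one_mul]
          calc 2 ^ (-k) * |y - x| ^ (2*h*k) ≤ 1 * |y - x| ^ (2*h*k) :=
                mul_le_mul_of_nonneg_right h2k1 hd2hk0
            _ = |y - x| ^ (2*h*k) := one_mul _
            _ ≤ |y - x| ^ (h*k) := step4
        calc 2 ^ (-k) * |(2 * y ^ (2*h)) ^ k - (x ^ (2*h) + y ^ (2*h)) ^ k|
              + 2 ^ (-k) * |y - x| ^ (2*h*k)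
            ≤ 2 ^ (-k) * (2 ^ k * |y - x| ^ (h*k)) + 1 * |y - x| ^ (h*k) := by linarith
          _ = 1 * (2 ^ k * |y - x| ^ (h*k)) * 2 ^ (-k) + 1 * |y - x| ^ (h*k) := by ring
    _ = (2 ^ (-k) * 2 ^ k) * |y - x| ^ (h*k) + |y - x| ^ (h*k) := by ring
    _ = 2 * |y - x| ^ (h*k) := by
        rw [show (2:ℝ) ^ (-k) * 2 ^ k = 1 from by
          rw [← Real.rpow_add two_pos, neg_add_cancel, Real.rpow_zero]]
        ring

lemma my_ABC_ub (hε0 : 0 < ε) (hh0 : 0 < h) (hh1 : h < 1) (hk0 : 0 < k) (hk1 : k ≤ 1)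
    (hx : ε ≤ x) (hx1 : x ≤ 1) (hy : ε ≤ y) (hy1 : y ≤ 1) :
    x ^ (2*h*k) + y ^ (2*h*k)
        - 2 * (2 ^ (-k) * ((x ^ (2*h) + y ^ (2*h)) ^ k - |y - x| ^ (2*h*k)))
      ≤ 3 * |y - x| ^ (2*h*k) := by
  have hx0 : (0:ℝ) ≤ x := (hε0.trans_le hx).le
  have hy0 : (0:ℝ) ≤ y := (hε0.trans_le hy).le
  have hd0 : (0:ℝ) ≤ |y - x| := abs_nonneg _
  have hhk0 : 0 < h * k := by positivity
  have hhk1 : h * k ≤ 1 := by nlinarith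
  have hGC := my_GC_ub (x := x) (y := y) hh0 hk0 hk1 hx0 hy0
  have h2k1 : (2:ℝ) ^ (-k) ≤ 1 :=
    Real.rpow_le_one_of_one_le_of_nonpos (by norm_num) (by linarith)
  have hd2hk0 : (0:ℝ) ≤ |y - x| ^ (2*h*k) := Real.rpow_nonneg hd0 _
  -- A + B - 2G = (x^{hk} - y^{hk})^2 ≤ d^{2hk}
  have ex : x ^ (2*h*k) = (x ^ (h*k)) ^ 2 := by
    rw [show (2:ℝ)*h*k = 2*(h*k) by ring, my_rpow_twice (h*k) hx0 hhk0]
  have ey : y ^ (2*h*k) = (y ^ (h*k)) ^ 2 := by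
    rw [show (2:ℝ)*h*k = 2*(h*k) by ring, my_rpow_twice (h*k) hy0 hhk0]
  have eG : (x*y) ^ (h*k) = x ^ (h*k) * y ^ (h*k) := Real.mul_rpow hx0 hy0
  have habs : |x ^ (h*k) - y ^ (h*k)| ≤ |y - x| ^ (h*k) := by
    have := my_abs_rpow_sub_le hx0 hy0 hhk0.le hhk1
    rwa [abs_sub_comm x y] at this
  have hAB2G : x ^ (2*h*k) + y ^ (2*h*k) - 2 * ((x*y) ^ (h*k)) ≤ |y - x| ^ (2*h*k) := by
    have e1 : x ^ (2*h*k) + y ^ (2*h*k) - 2 * ((x*y) ^ (h*k))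
        = (x ^ (h*k) - y ^ (h*k)) ^ 2 := by
      rw [ex, ey, eG]; ring
    have e2 : (x ^ (h*k) - y ^ (h*k)) ^ 2 ≤ (|y - x| ^ (h*k)) ^ 2 := by
      rw [← sq_abs]
      exact pow_le_pow_left₀ (abs_nonneg _) habs 2
    have e3 : (|y - x| ^ (h*k)) ^ 2 = |y - x| ^ (2*h*k) := by
      rw [show (2:ℝ)*h*k = 2*(h*k) by ring, my_rpow_twice (h*k) hd0 hhk0]
    rw [e1]; rw [e3] at e2; exact e2
  -- combine
  have hGC' : (x*y) ^ (h*k) - 2 ^ (-k) * ((x ^ (2*h) + y ^ (2*h)) ^ k - |y - x| ^ (2*h*k))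
      ≤ |y - x| ^ (2*h*k) := by
    calc (x*y) ^ (h*k) - 2 ^ (-k) * ((x ^ (2*h) + y ^ (2*h)) ^ k - |y - x| ^ (2*h*k))
        ≤ 2 ^ (-k) * |y - x| ^ (2*h*k) := hGC
      _ ≤ 1 * |y - x| ^ (2*h*k) := mul_le_mul_of_nonneg_right h2k1 hd2hk0
      _ = |y - x| ^ (2*h*k) := one_mul _
  linarith

end OneDMore


set_option maxHeartbeats 1000000

/-- The covariance function of the `(N,1)`-bifractional Brownian sheet:
`R_N(s,t) = ∏_j 2^{-K_j}[(s_j^{2H_j}+t_j^{2H_j})^{K_j} - |t_j-s_j|^{2H_jK_j}]`. -/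
noncomputable def RbifSheet (N : ℕ) (H K : Fin N → ℝ) (s t : Fin N → ℝ) : ℝ :=
  ∏ j : Fin N,
    (2 : ℝ) ^ (-(K j)) *
      ((s j ^ (2 * H j) + t j ^ (2 * H j)) ^ (K j) - |t j - s j| ^ (2 * H j * K j))

/-- Lemma 4.9: for every `ε ∈ (0,1)` there are positive finite
constants `c₇, c₈` such that for all `s, t ∈ [ε,1]^N`,
(i) `c₇ ∑_j |s_j-t_j|^{2H_jK_j} ≤ R_N(s,s)+R_N(t,t)-2R_N(s,t) ≤ c₈ ∑_j |s_j-t_j|^{2H_jK_j}`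
(the middle quantity is `E[(B₁(s)-B₁(t))²]`), and
(ii) `c₇ ∑_j |s_j-t_j|^{2H_jK_j} ≤ R_N(s,s)R_N(t,t) - R_N(s,t)² ≤ c₈ ∑_j |s_j-t_j|^{2H_jK_j}`
(the middle quantity is `detCov(B₁(s), B₁(t))`). -/
theorem bifSheet_increment_and_detCov_bounds (N : ℕ) (hN : 0 < N)
    (H K : Fin N → ℝ) (hH : ∀ j, H j ∈ Set.Ioo (0:ℝ) 1)
    (hK : ∀ j, K j ∈ Set.Ioc (0:ℝ) 1) (ε : ℝ) (hε : ε ∈ Set.Ioo (0:ℝ) 1) :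
    ∃ c₇ c₈ : ℝ, 0 < c₇ ∧ 0 < c₈ ∧
      ∀ s t : Fin N → ℝ, (∀ j, s j ∈ Set.Icc ε 1) → (∀ j, t j ∈ Set.Icc ε 1) →
        (c₇ * ∑ j, |s j - t j| ^ (2 * H j * K j) ≤
            RbifSheet N H K s s + RbifSheet N H K t t - 2 * RbifSheet N H K s t ∧
          RbifSheet N H K s s + RbifSheet N H K t t - 2 * RbifSheet N H K s t ≤
            c₈ * ∑ j, |s j - t j| ^ (2 * H j * K j)) ∧
        (c₇ * ∑ j, |s j - t j| ^ (2 * H j * K j) ≤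
            RbifSheet N H K s s * RbifSheet N H K t t - RbifSheet N H K s t ^ 2 ∧
          RbifSheet N H K s s * RbifSheet N H K t t - RbifSheet N H K s t ^ 2 ≤
            c₈ * ∑ j, |s j - t j| ^ (2 * H j * K j)) := by

  obtain ⟨hε0, hε1⟩ := hε
  have : Nonempty (Fin N) := ⟨⟨0, hN⟩⟩
  have hne : (Finset.univ : Finset (Fin N)).Nonempty := Finset.univ_nonempty
  -- the constants
  set k0 : ℝ := Finset.univ.inf' hne K with hk0def
  have hk0pos : 0 < k0 := by
    rw [hk0def, Finset.lt_inf'_iff]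
    exact fun j _ => (hK j).1
  have hk0le : ∀ j, k0 ≤ K j := fun j => Finset.inf'_le _ (Finset.mem_univ j)
  have hk0le1 : k0 ≤ 1 := (hk0le ⟨0, hN⟩).trans (hK _).2
  set ρ : ℝ :=
    Finset.univ.inf' hne (fun j => 2 ^ (-(K j)) * (1 - (1-ε) ^ (2*(K j)*(1-(H j)))))
    with hρdef
  have hρpos : 0 < ρ := by
    rw [hρdef, Finset.lt_inf'_iff]
    intro j _
    have h1 : (0:ℝ) < 2 ^ (-(K j)) := Real.rpow_pos_of_pos two_pos _
    have h2 : (1-ε) ^ (2*(K j)*(1-(H j))) < 1 := by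
      apply Real.rpow_lt_one (by linarith) (by linarith)
      have h3 := (hH j).2
      have h4 := (hK j).1
      nlinarith
    exact mul_pos h1 (by linarith)
  have hρle : ∀ j, ρ ≤ 2 ^ (-(K j)) * (1 - (1-ε) ^ (2*(K j)*(1-(H j)))) :=
    fun j => Finset.inf'_le _ (Finset.mem_univ j)
  set m : ℝ := k0 / 2 * ε ^ 2 with hmdef
  have hm0 : 0 < m := by
    rw [hmdef]; positivity
  have hm1 : m ≤ 1 := by
    rw [hmdef]; nlinarith
  refine ⟨ε ^ (2*N) * m ^ N * ρ, 3 + 4 * (N:ℝ), by positivity, by positivity, ?_⟩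
  intro s t hs ht
  -- per-coordinate quantities
  set A : Fin N → ℝ := fun j => s j ^ (2 * H j * K j) with hAdef
  set B : Fin N → ℝ := fun j => t j ^ (2 * H j * K j) with hBdef
  set G : Fin N → ℝ := fun j => (s j * t j) ^ (H j * K j) with hGdef
  set C : Fin N → ℝ := fun j =>
    (2:ℝ) ^ (-(K j)) *
      ((s j ^ (2 * H j) + t j ^ (2 * H j)) ^ (K j) - |t j - s j| ^ (2 * H j * K j))
    with hCdef
  set d : Fin N → ℝ := fun j => |t j - s j| with hddef
  -- basic facts
  have hsj := fun j => (hs j)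
  have htj := fun j => (ht j)
  have hs0 : ∀ j, (0:ℝ) ≤ s j := fun j => (hε0.trans_le (hs j).1).le
  have ht0 : ∀ j, (0:ℝ) ≤ t j := fun j => (hε0.trans_le (ht j).1).le
  have hHj0 : ∀ j, 0 < H j := fun j => (hH j).1
  have hHj1 : ∀ j, H j < 1 := fun j => (hH j).2
  have hKj0 : ∀ j, 0 < K j := fun j => (hK j).1
  have hKj1 : ∀ j, K j ≤ 1 := fun j => (hK j).2
  have hd0 : ∀ j, 0 ≤ d j := fun j => abs_nonneg _
  have hd1 : ∀ j, d j ≤ 1 := fun j => by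
    rw [hddef, abs_le]
    constructor
    · have := (hs j).2; have := (ht j).1; linarith
    · have := (ht j).2; have := (hs j).1; linarith
  have hexps : ∀ j, 0 < 2 * H j * K j := fun j => by
    have := hHj0 j; have := hKj0 j; positivity
  have hexps2 : ∀ j, 2 * H j * K j ≤ 2 := fun j => by
    have h1 := hHj1 j; have h2 := hKj1 j; have h3 := hHj0 j; have h4 := hKj0 j
    nlinarith
  -- bounds on A, B, G, C
  have hA_lb : ∀ j, ε ^ 2 ≤ A j := fun j =>
    my_rpow_ge_eps_sq hε0 (hs j).1 (hs j).2 (hexps j) (hexps2 j)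
  have hA_ub : ∀ j, A j ≤ 1 := fun j =>
    Real.rpow_le_one (hs0 j) (hs j).2 (hexps j).le
  have hB_lb : ∀ j, ε ^ 2 ≤ B j := fun j =>
    my_rpow_ge_eps_sq hε0 (ht j).1 (ht j).2 (hexps j) (hexps2 j)
  have hB_ub : ∀ j, B j ≤ 1 := fun j =>
    Real.rpow_le_one (ht0 j) (ht j).2 (hexps j).le
  have hA0 : ∀ j, 0 ≤ A j := fun j => le_trans (by positivity) (hA_lb j)
  have hB0 : ∀ j, 0 ≤ B j := fun j => le_trans (by positivity) (hB_lb j)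
  have hG_lb : ∀ j, ε ^ 2 ≤ G j := fun j => by
    have hst0 : 0 < s j * t j := by
      have := hε0.trans_le (hs j).1; have := hε0.trans_le (ht j).1; positivity
    have hst1 : s j * t j ≤ 1 := by
      have := (hs j).2; have := (ht j).2; have := hs0 j; have := ht0 j; nlinarith
    have h1 : s j * t j ≤ G j :=
      my_base_lb hst0 hst1 (by nlinarith [hHj1 j, hKj1 j, hHj0 j, hKj0 j])
    have h2 : ε ^ 2 ≤ s j * t j := by
      have := (hs j).1; have := (ht j).1; nlinarith
    linarith
  have hG_ub : ∀ j, G j ≤ 1 := fun j =>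
    Real.rpow_le_one (mul_nonneg (hs0 j) (ht0 j))
      (by have := (hs j).2; have := (ht j).2; have := hs0 j; nlinarith)
      (by have := hHj0 j; have := hKj0 j; positivity)
  have hG0 : ∀ j, 0 ≤ G j := fun j => le_trans (by positivity) (hG_lb j)
  have hC_lb : ∀ j, m ≤ C j := fun j => by
    have h1 := my_C_lb hε0 hε1 (hHj0 j) (hHj1 j) (hKj0 j) (hKj1 j)
      (hs j).1 (hs j).2 (ht j).1 (ht j).2
    have h2 : m ≤ K j / 2 * ε ^ 2 := by
      rw [hmdef]
      have := hk0le j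
      nlinarith
    exact h2.trans h1
  have hC0 : ∀ j, 0 ≤ C j := fun j => hm0.le.trans (hC_lb j)
  have hGC_lb : ∀ j, ρ * d j ^ (2 * H j * K j) ≤ G j - C j := fun j => by
    have h1 := my_GC_lb hε0 hε1 (hHj0 j) (hHj1 j) (hKj0 j) (hKj1 j)
      (hs j).1 (hs j).2 (ht j).1 (ht j).2
    have h2 : ρ * d j ^ (2 * H j * K j)
        ≤ 2 ^ (-(K j)) * (1 - (1-ε) ^ (2*(K j)*(1-(H j)))) * d j ^ (2 * H j * K j) :=
      mul_le_mul_of_nonneg_right (hρle j) (Real.rpow_nonneg (hd0 j) _)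
    exact h2.trans (by exact_mod_cast h1)
  have hGC_ub : ∀ j, G j - C j ≤ d j ^ (2 * H j * K j) := fun j => by
    have h1 := my_GC_ub (x := s j) (y := t j) (hHj0 j) (hKj0 j) (hKj1 j) (hs0 j) (ht0 j)
    have h2k1 : (2:ℝ) ^ (-(K j)) ≤ 1 :=
      Real.rpow_le_one_of_one_le_of_nonpos (by norm_num) (by have := hKj0 j; linarith)
    have h3 : (2:ℝ) ^ (-(K j)) * d j ^ (2 * H j * K j) ≤ 1 * d j ^ (2 * H j * K j) :=
      mul_le_mul_of_nonneg_right h2k1 (Real.rpow_nonneg (hd0 j) _)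
    rw [one_mul] at h3
    exact le_trans h1 h3
  have hCG : ∀ j, C j ≤ G j := fun j => by
    have := hGC_lb j
    nlinarith [mul_nonneg hρpos.le (Real.rpow_nonneg (hd0 j) (2 * H j * K j))]
  have hC_ub : ∀ j, C j ≤ 1 := fun j => (hCG j).trans (hG_ub j)
  have hGsq : ∀ j, (G j) ^ 2 = A j * B j := fun j =>
    my_G_sq (hHj0 j) (hKj0 j) (hs0 j) (ht0 j)
  have hCsq : ∀ j, (C j) ^ 2 ≤ A j * B j := fun j => by
    rw [← hGsq j]
    exact pow_le_pow_left₀ (hC0 j) (hCG j) 2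
  have hAB_ub : ∀ j, |B j - A j| ≤ 2 * d j ^ (H j * K j) := fun j =>
    my_AB_ub (hHj0 j) (hHj1 j) (hKj0 j) (hKj1 j) (hs0 j) (hs j).2 (ht0 j) (ht j).2
  have hBC_ub : ∀ j, |B j - C j| ≤ 2 * d j ^ (H j * K j) := fun j =>
    my_BC_ub hε0 (hHj0 j) (hHj1 j) (hKj0 j) (hKj1 j) (hs j).1 (hs j).2 (ht j).1 (ht j).2
  have hABC_ub : ∀ j, A j + B j - 2 * C j ≤ 3 * d j ^ (2 * H j * K j) := fun j =>
    my_ABC_ub hε0 (hHj0 j) (hHj1 j) (hKj0 j) (hKj1 j) (hs j).1 (hs j).2 (ht j).1 (ht j).2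
  have hdsq : ∀ j, (d j ^ (H j * K j)) ^ 2 = d j ^ (2 * H j * K j) := fun j => by
    rw [show (2:ℝ) * H j * K j = 2 * (H j * K j) by ring,
      my_rpow_twice (H j * K j) (hd0 j) (by have := hHj0 j; have := hKj0 j; positivity)]
  -- identify the products
  have hRss : RbifSheet N H K s s = ∏ j, A j := by
    unfold RbifSheet
    exact Finset.prod_congr rfl fun j _ => my_diag (hHj0 j) (hKj0 j) (hs0 j)
  have hRtt : RbifSheet N H K t t = ∏ j, B j := by
    unfold RbifSheet
    exact Finset.prod_congr rfl fun j _ => my_diag (hHj0 j) (hKj0 j) (ht0 j)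
  have hRst : RbifSheet N H K s t = ∏ j, C j := rfl
  -- sums
  have hsum_eq : ∑ j, |s j - t j| ^ (2 * H j * K j) = ∑ j, d j ^ (2 * H j * K j) :=
    Finset.sum_congr rfl fun j _ => by rw [hddef, abs_sub_comm]
  set S0 : ℝ := ∑ j, d j ^ (2 * H j * K j) with hS0def
  set S1 : ℝ := ∑ j, d j ^ (H j * K j) with hS1def
  have hS0nn : 0 ≤ S0 := Finset.sum_nonneg fun j _ => Real.rpow_nonneg (hd0 j) _
  have hS1nn : 0 ≤ S1 := Finset.sum_nonneg fun j _ => Real.rpow_nonneg (hd0 j) _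
  -- product-level bounds
  have hhyp : ∀ j ∈ Finset.univ,
      (0 ≤ A j ∧ A j ≤ 1) ∧ (0 ≤ B j ∧ B j ≤ 1) ∧ 0 ≤ C j ∧ C j ^ 2 ≤ A j * B j :=
    fun j _ => ⟨⟨hA0 j, hA_ub j⟩, ⟨hB0 j, hB_ub j⟩, hC0 j, hCsq j⟩
  have hcard : (Finset.univ : Finset (Fin N)).card = N := by simp
  -- ∏G - ∏C lower bound
  have hPGC_lb : m ^ N * (ρ * S0) ≤ ∏ j, G j - ∏ j, C j := by
    have h1 := my_prod_sub_prod_ge Finset.univ G C m hm0.le hm1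
      (fun j _ => ⟨hC_lb j, hCG j, hG_ub j⟩)
    rw [hcard] at h1
    have h2 : ρ * S0 ≤ ∑ j, (G j - C j) := by
      rw [hS0def, Finset.mul_sum]
      exact Finset.sum_le_sum fun j _ => hGC_lb j
    calc m ^ N * (ρ * S0) ≤ m ^ N * ∑ j, (G j - C j) :=
          mul_le_mul_of_nonneg_left h2 (pow_nonneg hm0.le N)
      _ ≤ ∏ j, G j - ∏ j, C j := h1
  -- ∏G - ∏C upper bound
  have hPGC_ub : ∏ j, G j - ∏ j, C j ≤ S0 := by
    have h1 := my_abs_prod_sub_prod_le Finset.univ G C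
      (fun j _ => ⟨hG0 j, hG_ub j⟩) (fun j _ => ⟨hC0 j, hC_ub j⟩)
    have h2 : ∑ j, |G j - C j| ≤ S0 := by
      rw [hS0def]
      refine Finset.sum_le_sum fun j _ => ?_
      rw [abs_of_nonneg (by linarith [hCG j])]
      exact hGC_ub j
    calc ∏ j, G j - ∏ j, C j ≤ |∏ j, G j - ∏ j, C j| := le_abs_self _
      _ ≤ ∑ j, |G j - C j| := h1
      _ ≤ S0 := h2
  -- products bounds
  have hPG_lb : ε ^ (2*N) ≤ ∏ j, G j := by
    have h1 : ∏ j, (ε^2 : ℝ) ≤ ∏ j, G j :=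
      Finset.prod_le_prod (fun j _ => by positivity) (fun j _ => hG_lb j)
    have h2 : ∏ j : Fin N, (ε^2 : ℝ) = ε ^ (2*N) := by
      rw [Finset.prod_const, hcard, ← pow_mul, mul_comm]
    linarith [h2 ▸ h1]
  have hPG_ub : ∏ j, G j ≤ 1 :=
    Finset.prod_le_one (fun j _ => hG0 j) (fun j _ => hG_ub j)
  have hPC0 : 0 ≤ ∏ j, C j := Finset.prod_nonneg fun j _ => hC0 j
  have hPC_ub : ∏ j, C j ≤ 1 :=
    Finset.prod_le_one (fun j _ => hC0 j) (fun j _ => hC_ub j)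
  have hPA0 : 0 ≤ ∏ j, A j := Finset.prod_nonneg fun j _ => hA0 j
  have hPB0 : 0 ≤ ∏ j, B j := Finset.prod_nonneg fun j _ => hB0 j
  -- (∏G)² = ∏A * ∏B
  have hPGsq : (∏ j, G j) ^ 2 = (∏ j, A j) * (∏ j, B j) := by
    rw [← Finset.prod_pow, ← Finset.prod_mul_distrib]
    exact Finset.prod_congr rfl fun j _ => hGsq j
  -- AM-GM at product level : 2∏G ≤ ∏A + ∏B
  have hAMGM : 2 * ∏ j, G j ≤ (∏ j, A j) + ∏ j, B j :=
    my_amgm hPA0 hPB0 (Finset.prod_nonneg fun j _ => hG0 j) (le_of_eq hPGsq)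
  -- increment upper bound
  have hI_ub : (∏ j, A j) + (∏ j, B j) - 2 * ∏ j, C j ≤ (3 + 4 * (N:ℝ)) * S0 := by
    have h1 := my_sum_incr_ub Finset.univ A B C hhyp
    have h2 : ∑ j, (A j + B j - 2 * C j) ≤ 3 * S0 := by
      rw [hS0def, Finset.mul_sum]
      exact Finset.sum_le_sum fun j _ => hABC_ub j
    have h3 : ∑ j, |B j - A j| ≤ 2 * S1 := by
      rw [hS1def, Finset.mul_sum]
      exact Finset.sum_le_sum fun j _ => hAB_ub j
    have h4 : ∑ j, |B j - C j| ≤ 2 * S1 := by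
      rw [hS1def, Finset.mul_sum]
      exact Finset.sum_le_sum fun j _ => hBC_ub j
    have h5 : (∑ j, |B j - A j|) * (∑ j, |B j - C j|) ≤ 4 * S1 ^ 2 := by
      have hb1 : 0 ≤ ∑ j, |B j - A j| := Finset.sum_nonneg fun j _ => abs_nonneg _
      have hb2 : 0 ≤ ∑ j, |B j - C j| := Finset.sum_nonneg fun j _ => abs_nonneg _
      nlinarith
    have h6 : S1 ^ 2 ≤ (N:ℝ) * S0 := by
      have := sq_sum_le_card_mul_sum_sq (s := (Finset.univ : Finset (Fin N)))
        (f := fun j => d j ^ (H j * K j))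
      rw [hcard] at this
      have e : ∑ j, (d j ^ (H j * K j)) ^ 2 = S0 := by
        rw [hS0def]
        exact Finset.sum_congr rfl fun j _ => hdsq j
      rw [e] at this
      exact_mod_cast this
    nlinarith
  -- increment lower bound
  have hI_lb : ε ^ (2*N) * m ^ N * ρ * S0
      ≤ (∏ j, A j) + (∏ j, B j) - 2 * ∏ j, C j := by
    have h1 : (∏ j, A j) + (∏ j, B j) - 2 * ∏ j, C j
        ≥ 2 * ((∏ j, G j) - ∏ j, C j) := by linarith
    have h2 : ε ^ (2*N) ≤ 1 := pow_le_one₀ hε0.le hε1.le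
    have h3 : 0 ≤ m ^ N * (ρ * S0) := by positivity
    have h4 : ε ^ (2*N) * m ^ N * ρ * S0 ≤ m ^ N * (ρ * S0) := by
      nlinarith
    nlinarith [hPGC_lb]
  -- detCov bounds
  have hdet_eq : (∏ j, A j) * (∏ j, B j) - (∏ j, C j) ^ 2
      = ((∏ j, G j) - ∏ j, C j) * ((∏ j, G j) + ∏ j, C j) := by
    rw [← hPGsq]; ring
  have hdet_lb : ε ^ (2*N) * m ^ N * ρ * S0
      ≤ (∏ j, A j) * (∏ j, B j) - (∏ j, C j) ^ 2 := by
    rw [hdet_eq]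
    have h1 : ε ^ (2*N) ≤ (∏ j, G j) + ∏ j, C j := by linarith
    have h2 : 0 ≤ m ^ N * (ρ * S0) := by positivity
    have h3 : m ^ N * (ρ * S0) * ε ^ (2*N)
        ≤ ((∏ j, G j) - ∏ j, C j) * ((∏ j, G j) + ∏ j, C j) :=
      mul_le_mul hPGC_lb h1 (by positivity) (by linarith [hPGC_lb])
    nlinarith
  have hdet_ub : (∏ j, A j) * (∏ j, B j) - (∏ j, C j) ^ 2 ≤ (3 + 4 * (N:ℝ)) * S0 := by
    rw [hdet_eq]
    have h1 : ((∏ j, G j) + ∏ j, C j) ≤ 2 := by linarith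
    have h0 : 0 ≤ (∏ j, G j) - ∏ j, C j := by
      have := hPGC_lb
      nlinarith [mul_nonneg (pow_nonneg hm0.le N) (mul_nonneg hρpos.le hS0nn)]
    have h2 : ((∏ j, G j) - ∏ j, C j) * ((∏ j, G j) + ∏ j, C j) ≤ S0 * 2 :=
      mul_le_mul hPGC_ub h1 (by linarith [hPC0, hPG_lb]) hS0nn
    have hN0 : (0:ℝ) ≤ (N:ℝ) := Nat.cast_nonneg N
    nlinarith
  -- conclude
  rw [hRss, hRtt, hRst, hsum_eq]
  exact ⟨⟨hI_lb, hI_ub⟩, ⟨hdet_lb, hdet_ub⟩⟩
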